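/- arXiv:1804.06021 — 7 statements merged into one kernel-verified Lean document; each statement's English description precedes it below -/
import Mathlib

section
/- Let H be a real symmetric positive definite n×n matrix, let Γ be a real n×n matrix, and let c > 0 be such that ΓᵀHΓ ⪯ H − c·I in the Loewner order. Then the squared spectral norm of L = H^{1/2} Γ H^{-1/2} satisfies ‖L‖² ≤ 1 − c/‖H‖, where ‖H‖ is the spectral norm of H and H^{1/2} is the positive semidefinite square root of H. -/
open Matrix

/-- Spectral norm: operator norm induced by the Euclidean norm. -/
noncomputable def specNorm {m n : ℕ} (A : Matrix (Fin m) (Fin n) ℝ) : ℝ :=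
  ‖LinearMap.toContinuousLinearMap (Matrix.toEuclideanLin A)‖

/-- Frobenius norm: square root of the sum of squares of the entries. -/
noncomputable def frobNorm {m n : ℕ} (A : Matrix (Fin m) (Fin n) ℝ) : ℝ :=
  Real.sqrt (∑ i, ∑ j, A i j ^ 2)
open scoped ComplexOrder in
/-- The positive semidefinite square root of a positive semidefinite matrix
(the definition `Matrix.PosSemidef.sqrt` of the older Mathlib, since removed). -/
noncomputable def Matrix.PosSemidef.sqrt {n 𝕜 : Type*} [Fintype n] [RCLike 𝕜] [DecidableEq n]
    {A : Matrix n n 𝕜} (hA : A.PosSemidef) : Matrix n n 𝕜 :=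
  hA.1.eigenvectorUnitary.1 * diagonal ((↑) ∘ (√·) ∘ hA.1.eigenvalues) *
    (star hA.1.eigenvectorUnitary : Matrix n n 𝕜)

/-! In the energy norm `‖y‖_H² = yᵀHy = ‖H^{1/2} y‖²` the hypothesis reads
`‖Γ y‖_H² ≤ ‖y‖_H² - c‖y‖²`. Substituting `x = H^{1/2} y` turns it into `‖L x‖² ≤ ‖x‖² - c‖y‖²`,
and `‖x‖² = ‖y‖_H² ≤ ‖H‖ ‖y‖²` bounds the loss `c‖y‖²` below by `(c/‖H‖) ‖x‖²`. -/

open scoped ComplexOrder MatrixOrder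

theorem Matrix.PosSemidef.sqrt_eq_cfcSqrt {n 𝕜 : Type*} [Fintype n] [RCLike 𝕜] [DecidableEq n]
    {A : Matrix n n 𝕜} (hA : A.PosSemidef) : hA.sqrt = CFC.sqrt A := by
  rw [CFC.sqrt_eq_cfc, cfc_nnreal_eq_real _ A hA.nonneg, hA.1.cfc_eq, IsHermitian.cfc,
    Unitary.conjStarAlgAut_apply, Matrix.PosSemidef.sqrt]
  congr 3
  funext i
  simp [max_eq_left (hA.eigenvalues_nonneg i)]

theorem Matrix.PosSemidef.transpose_sqrt_mul_sqrt {n : Type*} [Fintype n] [DecidableEq n]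
    {A : Matrix n n ℝ} (hA : A.PosSemidef) : hA.sqrtᵀ * hA.sqrt = A := by
  rw [hA.sqrt_eq_cfcSqrt, ← conjTranspose_eq_transpose_of_trivial, ← star_eq_conjTranspose,
    (CFC.sqrt_nonneg A).isSelfAdjoint.star_eq]
  exact CFC.sqrt_mul_sqrt_self A hA.nonneg

theorem Matrix.PosDef.isUnit_sqrt {n 𝕜 : Type*} [Fintype n] [RCLike 𝕜] [DecidableEq n]
    {A : Matrix n n 𝕜} (hA : A.PosDef) : IsUnit hA.posSemidef.sqrt := by
  rw [hA.posSemidef.sqrt_eq_cfcSqrt]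
  exact (CFC.isUnit_sqrt_iff A hA.posSemidef.nonneg).2 hA.isUnit

theorem EuclideanSpace.norm_toLp_sq {ι : Type*} [Fintype ι] (x : ι → ℝ) :
    ‖WithLp.toLp 2 x‖ ^ 2 = x ⬝ᵥ x := by
  rw [← real_inner_self_eq_norm_sq, EuclideanSpace.inner_toLp_toLp, star_trivial]

theorem Matrix.mulVec_dotProduct_mulVec {l m n R : Type*} [Fintype l] [Fintype m] [Fintype n]
    [CommSemiring R] (A : Matrix l m R) (B : Matrix l n R) (u : m → R) (v : n → R) :
    A *ᵥ u ⬝ᵥ B *ᵥ v = u ⬝ᵥ (Aᵀ * B) *ᵥ v := by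
  rw [dotProduct_mulVec u, ← vecMul_vecMul, vecMul_transpose, ← dotProduct_mulVec]

section specNorm

variable {m n : ℕ}

theorem specNorm_nonneg (A : Matrix (Fin m) (Fin n) ℝ) : 0 ≤ specNorm A :=
  norm_nonneg _

theorem specNorm_eq_zero_of_isEmpty [IsEmpty (Fin n)] (A : Matrix (Fin m) (Fin n) ℝ) :
    specNorm A = 0 :=
  ContinuousLinearMap.opNorm_subsingleton _

theorem norm_toLp_mulVec_le_specNorm_mul (A : Matrix (Fin m) (Fin n) ℝ) (x : Fin n → ℝ) :
    ‖WithLp.toLp 2 (A *ᵥ x)‖ ≤ specNorm A * ‖WithLp.toLp 2 x‖ :=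
  (LinearMap.toContinuousLinearMap (toEuclideanLin A)).le_opNorm (WithLp.toLp 2 x)

theorem dotProduct_mulVec_le_specNorm_mul (A : Matrix (Fin n) (Fin n) ℝ) (x : Fin n → ℝ) :
    x ⬝ᵥ A *ᵥ x ≤ specNorm A * (x ⬝ᵥ x) :=
  calc x ⬝ᵥ A *ᵥ x = inner ℝ (WithLp.toLp 2 x) (WithLp.toLp 2 (A *ᵥ x)) := by
        rw [EuclideanSpace.inner_toLp_toLp, star_trivial, dotProduct_comm]
    _ ≤ ‖WithLp.toLp 2 x‖ * ‖WithLp.toLp 2 (A *ᵥ x)‖ := real_inner_le_norm _ _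
    _ ≤ ‖WithLp.toLp 2 x‖ * (specNorm A * ‖WithLp.toLp 2 x‖) := by
        gcongr; exact norm_toLp_mulVec_le_specNorm_mul A x
    _ = specNorm A * (x ⬝ᵥ x) := by rw [← EuclideanSpace.norm_toLp_sq]; ring

theorem specNorm_sq_le_of_forall_dotProduct_le [Nonempty (Fin n)] (A : Matrix (Fin m) (Fin n) ℝ)
    {M : ℝ} (h : ∀ x, A *ᵥ x ⬝ᵥ A *ᵥ x ≤ M * (x ⬝ᵥ x)) : specNorm A ^ 2 ≤ M := by
  have hM : 0 ≤ M := by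
    obtain ⟨i⟩ := ‹Nonempty (Fin n)›
    simpa using (dotProduct_self_star_nonneg (A *ᵥ Pi.single i 1)).trans (h (Pi.single i 1))
  have hbound : specNorm A ≤ √M := by
    refine ContinuousLinearMap.opNorm_le_bound _ (Real.sqrt_nonneg M) fun x => ?_
    rw [← Real.sqrt_sq (norm_nonneg _), ← Real.sqrt_sq (norm_nonneg x), ← Real.sqrt_mul hM]
    refine Real.sqrt_le_sqrt ?_
    change ‖WithLp.toLp 2 (A *ᵥ x.ofLp)‖ ^ 2 ≤ M * ‖WithLp.toLp 2 x.ofLp‖ ^ 2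
    simpa only [EuclideanSpace.norm_toLp_sq] using h x.ofLp
  calc specNorm A ^ 2 ≤ √M ^ 2 := by gcongr; exact specNorm_nonneg A
    _ = M := Real.sq_sqrt hM

end specNorm

theorem Matrix.PosSemidef.dotProduct_mulVec_conj_le {n : Type*} [Fintype n] [DecidableEq n]
    {H Γ : Matrix n n ℝ} {c : ℝ} (hle : (H - c • (1 : Matrix n n ℝ) - Γᵀ * H * Γ).PosSemidef)
    (y : n → ℝ) : Γ *ᵥ y ⬝ᵥ H *ᵥ (Γ *ᵥ y) ≤ y ⬝ᵥ H *ᵥ y - c * (y ⬝ᵥ y) := by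
  have h := hle.dotProduct_mulVec_nonneg y
  rw [star_trivial, sub_mulVec, sub_mulVec, dotProduct_sub, dotProduct_sub, smul_mulVec,
    one_mulVec, dotProduct_smul, smul_eq_mul, Matrix.mul_assoc, ← mulVec_dotProduct_mulVec,
    ← mulVec_mulVec] at h
  linarith

theorem conj_mulVec_dotProduct_self_le {n : ℕ} {S H Γ : Matrix (Fin n) (Fin n) ℝ} {c : ℝ}
    (hc : 0 ≤ c) (hSH : Sᵀ * S = H) (hS : IsUnit S)
    (hle : (H - c • (1 : Matrix (Fin n) (Fin n) ℝ) - Γᵀ * H * Γ).PosSemidef) (x : Fin n → ℝ) :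
    (S * Γ * S⁻¹) *ᵥ x ⬝ᵥ (S * Γ * S⁻¹) *ᵥ x ≤ (1 - c / specNorm H) * (x ⬝ᵥ x) := by
  set y := S⁻¹ *ᵥ x
  have hx : S *ᵥ y = x := by
    rw [mulVec_mulVec, mul_nonsing_inv _ ((isUnit_iff_isUnit_det S).1 hS), one_mulVec]
  have hLx : (S * Γ * S⁻¹) *ᵥ x = S *ᵥ (Γ *ᵥ y) := by simp only [y, mulVec_mulVec, Matrix.mul_assoc]
  have hxx : x ⬝ᵥ x = y ⬝ᵥ H *ᵥ y := by rw [← hx, mulVec_dotProduct_mulVec, hSH]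
  have hloss : c / specNorm H * (x ⬝ᵥ x) ≤ c * (y ⬝ᵥ y) := by
    have hxy : x ⬝ᵥ x ≤ specNorm H * (y ⬝ᵥ y) := hxx ▸ dotProduct_mulVec_le_specNorm_mul H y
    rcases (specNorm_nonneg H).eq_or_lt with h0 | hpos
    · rw [← h0, div_zero, zero_mul]
      exact mul_nonneg hc (dotProduct_self_star_nonneg y)
    · rw [div_mul_eq_mul_div, div_le_iff₀ hpos]
      nlinarith
  calc (S * Γ * S⁻¹) *ᵥ x ⬝ᵥ (S * Γ * S⁻¹) *ᵥ x = Γ *ᵥ y ⬝ᵥ H *ᵥ (Γ *ᵥ y) := by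
        rw [hLx, mulVec_dotProduct_mulVec, hSH]
    _ ≤ x ⬝ᵥ x - c * (y ⬝ᵥ y) := hxx ▸ hle.dotProduct_mulVec_conj_le y
    _ ≤ (1 - c / specNorm H) * (x ⬝ᵥ x) := by linarith

/-- If `H` is symmetric positive definite, `c > 0`, and `ΓᵀHΓ ⪯ H - c•I` (Loewner order),
then the squared spectral norm of `L = H^{1/2} Γ H^{-1/2}` is at most `1 - c/‖H‖`. -/
theorem stmt1 {n : ℕ} (H Γ : Matrix (Fin n) (Fin n) ℝ) (hH : H.PosDef)
    (c : ℝ) (hc : 0 < c)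
    (hle : (H - c • (1 : Matrix (Fin n) (Fin n) ℝ) - Γᵀ * H * Γ).PosSemidef) :
    specNorm (hH.posSemidef.sqrt * Γ * (hH.posSemidef.sqrt)⁻¹) ^ 2 ≤ 1 - c / specNorm H := by
  rcases isEmpty_or_nonempty (Fin n) with hn | hn
  · simp [specNorm_eq_zero_of_isEmpty]
  exact specNorm_sq_le_of_forall_dotProduct_le _ <|
    conj_mulVec_dotProduct_self_le hc.le hH.posSemidef.transpose_sqrt_mul_sqrt
      (Matrix.PosDef.isUnit_sqrt hH) hle
end

section
/- Let H and Δ be real symmetric n×n matrices with H positive definite, let Γ be a real n×n matrix, and let c > 0 be such that ΓᵀHΓ ⪯ H − c·I in the Loewner order. Then ‖Δ − ΓᵀΔΓ‖_F ≥ (c² / ‖H‖²)·‖Δ‖_F, where ‖H‖ is the spectral norm of H and ‖·‖_F is the Frobenius norm. -/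
open Matrix

/-!
Let `R = H^{1/2}` and `S = R Γ R⁻¹`. Since `H ⪯ ‖H‖ I`, the hypothesis gives
`Γᵀ H Γ ⪯ H - c I ⪯ ρ H` with `ρ = 1 - c / ‖H‖`, i.e. `Sᵀ S ⪯ ρ I`, so `‖S‖² ≤ ρ` and
`X ↦ Sᵀ X S` contracts the Frobenius norm by the factor `ρ`. For `Y = R⁻¹ Δ R⁻¹` we have
`R⁻¹ (Δ - Γᵀ Δ Γ) R⁻¹ = Y - Sᵀ Y S`, whence
`(c / ‖H‖) ‖Y‖_F ≤ ‖R⁻¹‖² ‖Δ - Γᵀ Δ Γ‖_F ≤ c⁻¹ ‖Δ - Γᵀ Δ Γ‖_F`,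
using `H ⪰ c I`; and `‖Δ‖_F = ‖R Y R‖_F ≤ ‖H‖ ‖Y‖_F`.
-/

section IsometricCFC

/- Real matrices with the `L²` operator norm are not a `CStarAlgebra` in Mathlib (that class
is over `ℂ`), but they do carry an isometric real continuous functional calculus. -/
variable {A : Type*} [NormedRing A] [StarRing A] [NormedAlgebra ℝ A] [PartialOrder A]
  [StarOrderedRing A] [IsometricContinuousFunctionalCalculus ℝ A IsSelfAdjoint]
  [NonnegSpectrumClass ℝ A]

open CFC IsometricContinuousFunctionalCalculus

lemma norm_le_iff_le_algebraMap_of_nonneg {a : A} (ha : 0 ≤ a) {r : ℝ} (hr : 0 ≤ r) :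
    ‖a‖ ≤ r ↔ a ≤ algebraMap ℝ A r := by
  have h := norm_cfc_le_iff (𝕜 := ℝ) id a hr
  rw [cfc_id ℝ a] at h
  rw [h, le_algebraMap_iff_spectrum_le]
  refine forall₂_congr fun x hx => ?_
  rw [id, Real.norm_of_nonneg (spectrum_nonneg_of_nonneg ha hx)]

lemma le_algebraMap_norm_of_isSelfAdjoint {a : A} (ha : IsSelfAdjoint a) :
    a ≤ algebraMap ℝ A ‖a‖ := by
  rw [le_algebraMap_iff_spectrum_le]
  exact fun x hx => (le_abs_self x).trans (norm_spectrum_le a hx ha)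

lemma le_norm_of_algebraMap_le [Nontrivial A] {a : A} (ha : IsSelfAdjoint a) {c : ℝ}
    (hca : algebraMap ℝ A c ≤ a) : c ≤ ‖a‖ := by
  obtain ⟨x, hx⟩ := ContinuousFunctionalCalculus.spectrum_nonempty (R := ℝ) a ha
  rw [algebraMap_le_iff_le_spectrum] at hca
  exact (hca x hx).trans ((le_abs_self x).trans (norm_spectrum_le a hx ha))

lemma div_norm_le_one_of_algebraMap_le {a : A} (ha : IsSelfAdjoint a) {c : ℝ}
    (hca : algebraMap ℝ A c ≤ a) : c / ‖a‖ ≤ 1 := by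
  obtain hA | hA := subsingleton_or_nontrivial A
  · simp [Subsingleton.elim a 0]
  exact div_le_one_of_le₀ (le_norm_of_algebraMap_le ha hca) (norm_nonneg a)

lemma smul_div_norm_le_algebraMap [StarModule ℝ A] {a : A} (ha : IsSelfAdjoint a) {c : ℝ}
    (hc : 0 ≤ c) : (c / ‖a‖) • a ≤ algebraMap ℝ A c :=
  calc (c / ‖a‖) • a ≤ (c / ‖a‖) • algebraMap ℝ A ‖a‖ := by
        gcongr
        exact le_algebraMap_norm_of_isSelfAdjoint ha
    _ = algebraMap ℝ A (c / ‖a‖ * ‖a‖) := by rw [map_mul, Algebra.smul_def]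
    _ ≤ algebraMap ℝ A c := by
        gcongr
        rcases eq_or_ne ‖a‖ 0 with h | h <;> simp [h, hc]

lemma norm_sq_le_of_star_mul_self_le [CStarRing A] {x : A} {r : ℝ} (hr : 0 ≤ r)
    (h : star x * x ≤ algebraMap ℝ A r) : ‖x‖ ^ 2 ≤ r := by
  rwa [sq, ← CStarRing.norm_star_mul_self,
    norm_le_iff_le_algebraMap_of_nonneg (star_mul_self_nonneg x) hr]

lemma norm_sqrt_sq [CStarRing A] {a : A} (ha : 0 ≤ a) : ‖sqrt a‖ ^ 2 = ‖a‖ := by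
  rw [sq, ← CStarRing.norm_star_mul_self, (sqrt_nonneg a).isSelfAdjoint.star_eq,
    sqrt_mul_sqrt_self a ha]

lemma sqrt_mul_rpow_neg_half {a : A} (ha : IsStrictlyPositive a) :
    sqrt a * a ^ (-(1 / 2) : ℝ) = 1 := by
  rw [sqrt_eq_rpow, rpow_mul_rpow_neg _ ha]

lemma rpow_neg_half_mul_sqrt {a : A} (ha : IsStrictlyPositive a) :
    a ^ (-(1 / 2) : ℝ) * sqrt a = 1 := by
  rw [sqrt_eq_rpow, rpow_neg_mul_rpow _ ha]

lemma rpow_neg_half_mul_mul_rpow_neg_half {a : A} (ha : IsStrictlyPositive a) :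
    a ^ (-(1 / 2) : ℝ) * a * a ^ (-(1 / 2) : ℝ) = 1 := by
  set p := a ^ (-(1 / 2) : ℝ)
  calc p * a * p = p * (sqrt a * sqrt a) * p := by rw [sqrt_mul_sqrt_self a ha.nonneg]
    _ = (p * sqrt a) * (sqrt a * p) := by simp only [mul_assoc]
    _ = 1 := by rw [rpow_neg_half_mul_sqrt ha, sqrt_mul_rpow_neg_half ha, one_mul]

lemma norm_rpow_neg_half_sq_le [CStarRing A] [StarModule ℝ A] {a : A}
    (ha : IsStrictlyPositive a) {c : ℝ} (hc : 0 < c) (hca : algebraMap ℝ A c ≤ a) :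
    ‖a ^ (-(1 / 2) : ℝ)‖ ^ 2 ≤ c⁻¹ := by
  set p := a ^ (-(1 / 2) : ℝ)
  have hp : star p = p := (rpow_nonneg : 0 ≤ p).isSelfAdjoint.star_eq
  refine norm_sq_le_of_star_mul_self_le (inv_nonneg.2 hc.le) ?_
  have hconj := star_left_conjugate_le_conjugate hca p
  rw [hp, rpow_neg_half_mul_mul_rpow_neg_half ha, Algebra.algebraMap_eq_smul_one,
    mul_smul_comm, mul_one, smul_mul_assoc] at hconj
  rw [hp, Algebra.algebraMap_eq_smul_one, ← inv_smul_smul₀ hc.ne' (p * p)]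
  exact smul_le_smul_of_nonneg_left hconj (inv_nonneg.2 hc.le)

lemma norm_sqrt_mul_mul_rpow_neg_half_sq_le [CStarRing A] [StarModule ℝ A] {a g : A}
    (ha : IsStrictlyPositive a) {c : ℝ} (hc : 0 ≤ c)
    (h : star g * a * g ≤ a - algebraMap ℝ A c) :
    ‖sqrt a * g * a ^ (-(1 / 2) : ℝ)‖ ^ 2 ≤ 1 - c / ‖a‖ := by
  set p := a ^ (-(1 / 2) : ℝ)
  have hp : star p = p := (rpow_nonneg : 0 ≤ p).isSelfAdjoint.star_eq
  have hq : star (sqrt a) = sqrt a := (sqrt_nonneg a).isSelfAdjoint.star_eq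
  have hca : algebraMap ℝ A c ≤ a :=
    sub_nonneg.mp ((star_left_conjugate_nonneg ha.nonneg g).trans h)
  have hga : star g * a * g ≤ (1 - c / ‖a‖) • a := by
    rw [sub_smul, one_smul]
    exact h.trans (sub_le_sub_left (smul_div_norm_le_algebraMap ha.isSelfAdjoint hc) a)
  refine norm_sq_le_of_star_mul_self_le
    (sub_nonneg.2 (div_norm_le_one_of_algebraMap_le ha.isSelfAdjoint hca)) ?_
  calc star (sqrt a * g * p) * (sqrt a * g * p)
        = p * (star g * (sqrt a * sqrt a) * g) * p := by
        simp only [star_mul, hp, hq]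
        noncomm_ring
    _ ≤ p * ((1 - c / ‖a‖) • a) * p := by
        rw [sqrt_mul_sqrt_self a ha.nonneg]
        simpa only [hp] using star_left_conjugate_le_conjugate hga p
    _ = algebraMap ℝ A (1 - c / ‖a‖) := by
        rw [mul_smul_comm, smul_mul_assoc, rpow_neg_half_mul_mul_rpow_neg_half ha,
          Algebra.algebraMap_eq_smul_one]

end IsometricCFC

lemma frobNorm_nonneg {m n : ℕ} (A : Matrix (Fin m) (Fin n) ℝ) : 0 ≤ frobNorm A :=
  Real.sqrt_nonneg _

lemma frobNorm_transpose {m n : ℕ} (A : Matrix (Fin m) (Fin n) ℝ) :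
    frobNorm Aᵀ = frobNorm A := by
  rw [frobNorm, frobNorm, Finset.sum_comm]
  rfl

section FrobeniusNorm

attribute [local instance] Matrix.frobeniusSeminormedAddCommGroup

lemma frobNorm_eq_frobenius_norm {m n : ℕ} (A : Matrix (Fin m) (Fin n) ℝ) :
    frobNorm A = ‖A‖ := by
  rw [frobNorm, Matrix.frobenius_norm_def, Real.sqrt_eq_rpow]
  simp only [Real.norm_eq_abs, Real.rpow_two, sq_abs]

lemma frobNorm_le_frobNorm_sub_add {m n : ℕ} (A B : Matrix (Fin m) (Fin n) ℝ) :
    frobNorm A ≤ frobNorm (A - B) + frobNorm B := by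
  simpa only [frobNorm_eq_frobenius_norm] using norm_le_norm_sub_add A B

end FrobeniusNorm

open scoped MatrixOrder Matrix.Norms.L2Operator

lemma frobNorm_mul_le_l2_opNorm_mul {l m n : ℕ} (A : Matrix (Fin l) (Fin m) ℝ)
    (B : Matrix (Fin m) (Fin n) ℝ) : frobNorm (A * B) ≤ ‖A‖ * frobNorm B := by
  rw [frobNorm, frobNorm, ← Real.sqrt_sq (norm_nonneg A), ← Real.sqrt_mul (sq_nonneg _)]
  refine Real.sqrt_le_sqrt ?_
  rw [Finset.sum_comm, Finset.sum_comm (f := fun i j => B i j ^ 2), Finset.mul_sum]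
  gcongr with j
  have hcol := pow_le_pow_left₀ (norm_nonneg _)
    (l2_opNorm_mulVec A (WithLp.toLp 2 (fun i => B i j))) 2
  rw [mul_pow, EuclideanSpace.norm_sq_eq, EuclideanSpace.norm_sq_eq] at hcol
  simpa [mul_apply, mulVec, dotProduct] using hcol

lemma frobNorm_mul_le_mul_l2_opNorm {l m n : ℕ} (A : Matrix (Fin l) (Fin m) ℝ)
    (B : Matrix (Fin m) (Fin n) ℝ) : frobNorm (A * B) ≤ frobNorm A * ‖B‖ := by
  rw [← frobNorm_transpose, transpose_mul, ← frobNorm_transpose A, mul_comm,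
    ← l2_opNorm_conjTranspose B, conjTranspose_eq_transpose_of_trivial]
  exact frobNorm_mul_le_l2_opNorm_mul _ _

lemma frobNorm_mul_mul_le {k l m n : ℕ} (A : Matrix (Fin k) (Fin l) ℝ)
    (X : Matrix (Fin l) (Fin m) ℝ) (B : Matrix (Fin m) (Fin n) ℝ) :
    frobNorm (A * X * B) ≤ ‖A‖ * frobNorm X * ‖B‖ :=
  (frobNorm_mul_le_mul_l2_opNorm _ B).trans <|
    mul_le_mul_of_nonneg_right (frobNorm_mul_le_l2_opNorm_mul A X) (norm_nonneg B)

lemma one_sub_l2_opNorm_sq_mul_frobNorm_le {n : ℕ} (S Y : Matrix (Fin n) (Fin n) ℝ) :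
    (1 - ‖S‖ ^ 2) * frobNorm Y ≤ frobNorm (Y - Sᵀ * Y * S) := by
  have hT : frobNorm (Sᵀ * Y * S) ≤ ‖S‖ ^ 2 * frobNorm Y := by
    have := frobNorm_mul_mul_le Sᵀ Y S
    rwa [← conjTranspose_eq_transpose_of_trivial, l2_opNorm_conjTranspose, mul_comm,
      ← mul_assoc, ← sq] at this
  linarith [frobNorm_le_frobNorm_sub_add Y (Sᵀ * Y * S)]

lemma one_sub_l2_opNorm_sq_mul_frobNorm_le_of_mul_eq_one {n : ℕ}
    {p q : Matrix (Fin n) (Fin n) ℝ} (hpq : p * q = 1) (hqp : q * p = 1)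
    (hp : IsSelfAdjoint p) (hq : IsSelfAdjoint q) (Γ Δ : Matrix (Fin n) (Fin n) ℝ) :
    (1 - ‖q * Γ * p‖ ^ 2) * frobNorm Δ ≤
      ‖q‖ ^ 2 * ‖p‖ ^ 2 * frobNorm (Δ - Γᵀ * Δ * Γ) := by
  replace hp : pᵀ = p := by rw [← conjTranspose_eq_transpose_of_trivial]; exact hp
  replace hq : qᵀ = q := by rw [← conjTranspose_eq_transpose_of_trivial]; exact hq
  have hqp' (X : Matrix (Fin n) (Fin n) ℝ) : q * (p * X) = X := by
    rw [← mul_assoc, hqp, one_mul]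
  have hpq' (X : Matrix (Fin n) (Fin n) ℝ) : p * (q * X) = X := by
    rw [← mul_assoc, hpq, one_mul]
  set Y := p * Δ * p
  set S := q * Γ * p
  have hΔ : Δ = q * Y * q := by simp only [Y, mul_assoc, hqp', hpq, mul_one]
  have hE : p * (Δ - Γᵀ * Δ * Γ) * p = Y - Sᵀ * Y * S := by
    simp only [Y, S, transpose_mul, hp, hq, mul_sub, sub_mul, mul_assoc, hqp', hpq']
  have hΔY : frobNorm Δ ≤ ‖q‖ ^ 2 * frobNorm Y :=
    calc frobNorm Δ = frobNorm (q * Y * q) := by rw [← hΔ]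
      _ ≤ ‖q‖ * frobNorm Y * ‖q‖ := frobNorm_mul_mul_le q Y q
      _ = ‖q‖ ^ 2 * frobNorm Y := by ring
  have hYE : (1 - ‖S‖ ^ 2) * frobNorm Y ≤ ‖p‖ ^ 2 * frobNorm (Δ - Γᵀ * Δ * Γ) :=
    calc (1 - ‖S‖ ^ 2) * frobNorm Y ≤ frobNorm (Y - Sᵀ * Y * S) :=
          one_sub_l2_opNorm_sq_mul_frobNorm_le S Y
      _ = frobNorm (p * (Δ - Γᵀ * Δ * Γ) * p) := by rw [hE]
      _ ≤ ‖p‖ * frobNorm (Δ - Γᵀ * Δ * Γ) * ‖p‖ := frobNorm_mul_mul_le _ _ _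
      _ = ‖p‖ ^ 2 * frobNorm (Δ - Γᵀ * Δ * Γ) := by ring
  rcases le_or_gt (1 - ‖S‖ ^ 2) 0 with hσ | hσ
  · exact (mul_nonpos_of_nonpos_of_nonneg hσ (frobNorm_nonneg Δ)).trans
      (mul_nonneg (by positivity) (frobNorm_nonneg _))
  · calc (1 - ‖S‖ ^ 2) * frobNorm Δ ≤ (1 - ‖S‖ ^ 2) * (‖q‖ ^ 2 * frobNorm Y) := by gcongr
      _ = ‖q‖ ^ 2 * ((1 - ‖S‖ ^ 2) * frobNorm Y) := by ring
      _ ≤ ‖q‖ ^ 2 * (‖p‖ ^ 2 * frobNorm (Δ - Γᵀ * Δ * Γ)) := by gcongr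
      _ = ‖q‖ ^ 2 * ‖p‖ ^ 2 * frobNorm (Δ - Γᵀ * Δ * Γ) := by ring

theorem stmt5_general {n : ℕ} (H Δ Γ : Matrix (Fin n) (Fin n) ℝ) (hH : H.PosDef)
    (c : ℝ) (hc : 0 < c)
    (hle : (H - c • (1 : Matrix (Fin n) (Fin n) ℝ) - Γᵀ * H * Γ).PosSemidef) :
    c ^ 2 / specNorm H ^ 2 * frobNorm Δ ≤ frobNorm (Δ - Γᵀ * Δ * Γ) := by
  have hH' : IsStrictlyPositive H := hH.isStrictlyPositive
  have hlyap : star Γ * H * Γ ≤ H - algebraMap ℝ _ c := by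
    rwa [Algebra.algebraMap_eq_smul_one, star_eq_conjTranspose,
      conjTranspose_eq_transpose_of_trivial, Matrix.le_iff]
  have hcH : algebraMap ℝ _ c ≤ H :=
    sub_nonneg.mp ((star_left_conjugate_nonneg hH'.nonneg Γ).trans hlyap)
  change c ^ 2 / ‖H‖ ^ 2 * frobNorm Δ ≤ _
  -- `‖H‖ = 0` only when `n = 0`, and then the left side is `c ^ 2 / 0 * 0 = 0`
  rcases (norm_nonneg H).eq_or_lt with hs | hs
  · simp [← hs, frobNorm_nonneg]
  set q := CFC.sqrt H
  set p := H ^ (-(1 / 2) : ℝ)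
  have hS : ‖q * Γ * p‖ ^ 2 ≤ 1 - c / ‖H‖ :=
    norm_sqrt_mul_mul_rpow_neg_half_sq_le hH' hc.le hlyap
  have hbound := one_sub_l2_opNorm_sq_mul_frobNorm_le_of_mul_eq_one (rpow_neg_half_mul_sqrt hH')
    (sqrt_mul_rpow_neg_half hH') CFC.rpow_nonneg.isSelfAdjoint
    (CFC.sqrt_nonneg H).isSelfAdjoint Γ Δ
  rw [norm_sqrt_sq hH'.nonneg] at hbound
  calc c ^ 2 / ‖H‖ ^ 2 * frobNorm Δ = c / ‖H‖ * (c / ‖H‖ * frobNorm Δ) := by ring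
    _ ≤ c / ‖H‖ * ((1 - ‖q * Γ * p‖ ^ 2) * frobNorm Δ) := by
        gcongr
        · exact frobNorm_nonneg Δ
        · linarith
    _ ≤ c / ‖H‖ * (‖H‖ * c⁻¹ * frobNorm (Δ - Γᵀ * Δ * Γ)) := by
        refine mul_le_mul_of_nonneg_left (hbound.trans ?_) (by positivity)
        have hp : ‖p‖ ^ 2 ≤ c⁻¹ := norm_rpow_neg_half_sq_le hH' hc hcH
        exact mul_le_mul_of_nonneg_right (mul_le_mul_of_nonneg_left hp hs.le)
          (frobNorm_nonneg _)
    _ = frobNorm (Δ - Γᵀ * Δ * Γ) := by field_simp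

/-- If `H ≻ 0` symmetric, `Δ` symmetric, `c > 0` and `ΓᵀHΓ ⪯ H - c•I`, then
`‖Δ - ΓᵀΔΓ‖_F ≥ (c²/‖H‖²)·‖Δ‖_F`. -/
theorem stmt5 {n : ℕ} (H Δ Γ : Matrix (Fin n) (Fin n) ℝ) (hH : H.PosDef)
    (hΔ : Δ.IsHermitian) (c : ℝ) (hc : 0 < c)
    (hle : (H - c • (1 : Matrix (Fin n) (Fin n) ℝ) - Γᵀ * H * Γ).PosSemidef) :
    c ^ 2 / specNorm H ^ 2 * frobNorm Δ ≤ frobNorm (Δ - Γᵀ * Δ * Γ) :=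
  stmt5_general H Δ Γ hH c hc hle
end

section
/- Let Γ be a real n×n matrix, let Σ, H, W, Q be real symmetric n×n matrices with Σ and H positive semidefinite and W positive semidefinite, satisfying Σ = ΓΣΓᵀ + W and H = ΓᵀHΓ + Q, and suppose Q ⪰ λ·I for some λ > 0. Then tr(Σ) ≤ ‖H‖·tr(W)/λ, where ‖H‖ is the spectral norm of H. -/
/-!
Multiplying the Lyapunov equation by `H` and the Bellman equation by `Σ` and cycling the trace
gives the duality `tr(QΣ) = tr(HW)`. Both sides are then compared with traces against the
identity: `Q ⪰ λ I` and `Σ ⪰ 0` give `λ tr Σ ≤ tr(QΣ)`, while `xᵀHx ≤ ‖H‖ xᵀx` and `W ⪰ 0`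
give `tr(HW) ≤ ‖H‖ tr W`. Both comparisons follow by writing the positive semidefinite factor
as a sum of rank-one matrices `v vᵀ`, against which the trace is the quadratic form at `v`.
-/

open Matrix

namespace Matrix

variable {n : Type*} [Fintype n]

theorem trace_mul_eq_of_lyapunov_of_bellman {R : Type*} [CommRing R] {Γ S H W Q : Matrix n n R}
    (hS : S = Γ * S * Γᵀ + W) (hH : H = Γᵀ * H * Γ + Q) : (Q * S).trace = (H * W).trace := by
  have hQ : Q = H - Γᵀ * H * Γ := eq_sub_of_add_eq' hH.symm
  have hW : W = S - Γ * S * Γᵀ := eq_sub_of_add_eq' hS.symm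
  have hcycle : (Γᵀ * H * Γ * S).trace = (H * (Γ * S * Γᵀ)).trace := by
    rw [Matrix.mul_assoc, Matrix.mul_assoc, trace_mul_comm, Matrix.mul_assoc, Matrix.mul_assoc]
  rw [hQ, hW, Matrix.sub_mul, Matrix.mul_sub, trace_sub, trace_sub, hcycle]

theorem trace_mul_vecMulVec {R : Type*} [CommSemiring R] (A : Matrix n n R) (v w : n → R) :
    (A * vecMulVec v w).trace = w ⬝ᵥ A *ᵥ v := by
  rw [mul_vecMulVec, trace_vecMulVec, dotProduct_comm]

theorem trace_mul_le_trace_mul_of_posSemidef {A B S : Matrix n n ℝ}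
    (hAB : ∀ x, x ⬝ᵥ A *ᵥ x ≤ x ⬝ᵥ B *ᵥ x) (hS : S.PosSemidef) :
    (A * S).trace ≤ (B * S).trace := by
  obtain ⟨m, v, rfl⟩ := posSemidef_iff_eq_sum_vecMulVec.mp hS
  simp only [Matrix.mul_sum, trace_sum, star_trivial, trace_mul_vecMulVec]
  exact Finset.sum_le_sum fun k _ ↦ hAB (v k)

theorem dotProduct_mulVec_le_of_posSemidef_sub {A B : Matrix n n ℝ} (hBA : (B - A).PosSemidef)
    (x : n → ℝ) : x ⬝ᵥ A *ᵥ x ≤ x ⬝ᵥ B *ᵥ x := by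
  simpa [sub_mulVec, dotProduct_sub] using hBA.dotProduct_mulVec_nonneg x

end Matrix

theorem dotProduct_mulVec_le_specNorm_smul_one {n : ℕ} (H : Matrix (Fin n) (Fin n) ℝ)
    (x : Fin n → ℝ) : x ⬝ᵥ H *ᵥ x ≤ x ⬝ᵥ (specNorm H • 1 : Matrix (Fin n) (Fin n) ℝ) *ᵥ x := by
  set y := WithLp.toLp 2 x
  calc x ⬝ᵥ H *ᵥ x = inner ℝ y (toEuclideanLin H y) := dotProduct_comm _ _
    _ ≤ ‖y‖ * ‖toEuclideanLin H y‖ := real_inner_le_norm _ _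
    _ ≤ ‖y‖ * (specNorm H * ‖y‖) := by
      gcongr
      exact (LinearMap.toContinuousLinearMap _).le_opNorm y
    _ = x ⬝ᵥ (specNorm H • 1 : Matrix (Fin n) (Fin n) ℝ) *ᵥ x := by
      have hnorm : ‖y‖ ^ 2 = x ⬝ᵥ x := (real_inner_self_eq_norm_sq y).symm
      rw [smul_mulVec, one_mulVec, dotProduct_smul, smul_eq_mul, ← hnorm]
      ring

theorem stmt10_general {n : ℕ} (Γ S H W Q : Matrix (Fin n) (Fin n) ℝ)
    (hS : S.PosSemidef) (hW : W.PosSemidef)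
    (hlyap : S = Γ * S * Γᵀ + W) (hbell : H = Γᵀ * H * Γ + Q)
    (lam : ℝ) (hlam : 0 < lam)
    (hQlow : (Q - lam • (1 : Matrix (Fin n) (Fin n) ℝ)).PosSemidef) :
    S.trace ≤ specNorm H * W.trace / lam := by
  rw [le_div_iff₀ hlam, mul_comm]
  calc lam * S.trace = (lam • 1 * S).trace := by simp
    _ ≤ (Q * S).trace :=
      trace_mul_le_trace_mul_of_posSemidef (dotProduct_mulVec_le_of_posSemidef_sub hQlow) hS
    _ = (H * W).trace := trace_mul_eq_of_lyapunov_of_bellman hlyap hbell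
    _ ≤ (specNorm H • 1 * W).trace :=
      trace_mul_le_trace_mul_of_posSemidef (dotProduct_mulVec_le_specNorm_smul_one H) hW
    _ = specNorm H * W.trace := by simp

/-- If `Σ ⪰ 0`, `H ⪰ 0`, `W ⪰ 0` are symmetric, `Σ = ΓΣΓᵀ + W`, `H = ΓᵀHΓ + Q` with
`Q` symmetric and `Q ⪰ λ•I` for some `λ > 0`, then `tr(Σ) ≤ ‖H‖·tr(W)/λ`. -/
theorem stmt10 {n : ℕ} (Γ S H W Q : Matrix (Fin n) (Fin n) ℝ)
    (hS : S.PosSemidef) (hHpsd : H.PosSemidef) (hW : W.PosSemidef) (hQ : Q.IsHermitian)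
    (hlyap : S = Γ * S * Γᵀ + W) (hbell : H = Γᵀ * H * Γ + Q)
    (lam : ℝ) (hlam : 0 < lam)
    (hQlow : (Q - lam • (1 : Matrix (Fin n) (Fin n) ℝ)).PosSemidef) :
    S.trace ≤ specNorm H * W.trace / lam :=
  stmt10_general Γ S H W Q hS hW hlyap hbell lam hlam hQlow
end

section
/- Let A be a real n×n matrix, B a real n×d matrix, M, N real symmetric matrices of sizes n×n and d×d, and H_j a real symmetric n×n matrix satisfying H_j = (A − BK_j)ᵀ H_j (A − BK_j) + M + K_jᵀ N K_j for some K_j ∈ ℝ^{d×n}. Define the (n+d)×(n+d) matrix G_j = [A B]ᵀ H_j [A B] + diag(M, N), and for any K ∈ ℝ^{d×n} and x ∈ ℝⁿ define X_K(x) = [I; −K] x xᵀ [I, −Kᵀ] ∈ ℝ^{(n+d)×(n+d)}. Let Ĝ_j be a real symmetric (n+d)×(n+d) matrix such that every entry of G_j − Ĝ_j has absolute value at most ε, and let K_{j+1} ∈ ℝ^{d×n} satisfy tr(Ĝ_j X_{K_{j+1}}(x)) ≤ tr(Ĝ_j X_{K_j}(x)) for all x ∈ ℝⁿ. Then for all x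 ∈ ℝⁿ: xᵀ(A − BK_{j+1})ᵀ H_j (A − BK_{j+1}) x + xᵀ(M + K_{j+1}ᵀ N K_{j+1}) x ≤ xᵀ H_j x + ε·𝟙ᵀ(|X_{K_j}(x)| + |X_{K_{j+1}}(x)|)𝟙, where |X| denotes the entrywise absolute value of a matrix and 𝟙 the all-ones vector in ℝ^{n+d}. -/
open Matrix

/-!
The state-action value matrix `G` of a policy `K` evaluates the one-step cost plus the value of
the next state, so testing it against `X_K(x) = [I; -K] x xᵀ [I; -K]ᵀ` gives
`tr(G X_K(x)) = xᵀ(A - BK)ᵀ H (A - BK)x + xᵀ(M + KᵀNK)x`; for `K = K_j` this is `xᵀ H_j x` by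
the Bellman equation. The update `K_{j+1}` is greedy only for the estimate `Ĝ`, and replacing `Ĝ`
by `G` on each side of `tr(Ĝ X_{K_{j+1}}) ≤ tr(Ĝ X_{K_j})` costs at most `ε ∑ |X|` by the
entrywise error bound.
-/

section Trace

variable {ι κ R : Type*} [Fintype ι] [Fintype κ]

lemma trace_mul_vecMulVec_self [CommSemiring R] (W : Matrix ι ι R) (x : ι → R) :
    (W * vecMulVec x x).trace = x ⬝ᵥ W *ᵥ x := by
  rw [mul_vecMulVec, trace_vecMulVec, dotProduct_comm]

lemma trace_mul_conj_vecMulVec_self [CommSemiring R] (G : Matrix ι ι R) (F : Matrix ι κ R)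
    (x : κ → R) :
    (G * (F * vecMulVec x x * Fᵀ)).trace = x ⬝ᵥ (Fᵀ * G * F) *ᵥ x := by
  rw [← Matrix.mul_assoc, ← Matrix.mul_assoc, trace_mul_comm, ← Matrix.mul_assoc,
    ← Matrix.mul_assoc, trace_mul_vecMulVec_self]

variable [CommRing R] [LinearOrder R] [IsStrictOrderedRing R]

lemma trace_mul_le_of_abs_le {E : Matrix ι ι R} {ε : R} (hE : ∀ i j, |E i j| ≤ ε)
    (X : Matrix ι ι R) :
    (E * X).trace ≤ ε * ∑ i, ∑ j, |X i j| := by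
  rw [trace_mul_comm, Finset.mul_sum]
  refine Finset.sum_le_sum fun i _ => ?_
  rw [Finset.mul_sum]
  refine Finset.sum_le_sum fun j _ => ?_
  calc X i j * E j i ≤ |X i j| * |E j i| := (le_abs_self _).trans (abs_mul _ _).le
    _ ≤ |X i j| * ε := mul_le_mul_of_nonneg_left (hE j i) (abs_nonneg _)
    _ = ε * |X i j| := mul_comm _ _

lemma trace_mul_le_of_trace_mul_le_of_abs_sub_le {G Ĝ : Matrix ι ι R} {ε : R}
    (hG : ∀ i j, |(G - Ĝ) i j| ≤ ε) {X Y : Matrix ι ι R}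
    (hĜ : (Ĝ * Y).trace ≤ (Ĝ * X).trace) :
    (G * Y).trace ≤ (G * X).trace + ε * ∑ i, ∑ j, (|X i j| + |Y i j|) := by
  have hY := trace_mul_le_of_abs_le hG Y
  have hX := trace_mul_le_of_abs_le (E := Ĝ - G)
    (fun i j => abs_sub_comm (G i j) (Ĝ i j) ▸ hG i j) X
  simp only [sub_mul, trace_sub] at hX hY
  simp only [Finset.sum_add_distrib, mul_add]
  linarith

end Trace

section ClosedLoop

variable {m p R : Type*} [Fintype m] [Fintype p] [DecidableEq m] [CommRing R]

lemma fromCols_mul_fromRows_one_neg (A : Matrix m m R) (B : Matrix m p R) (K : Matrix p m R) :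
    fromCols A B * fromRows (1 : Matrix m m R) (-K) = A - B * K := by
  rw [fromCols_mul_fromRows, Matrix.mul_one, Matrix.mul_neg, sub_eq_add_neg]

lemma fromRows_one_neg_transpose_mul_fromBlocks_mul (M : Matrix m m R) (N : Matrix p p R)
    (K : Matrix p m R) :
    (fromRows (1 : Matrix m m R) (-K))ᵀ * fromBlocks M 0 0 N * fromRows (1 : Matrix m m R) (-K)
      = M + Kᵀ * N * K := by
  rw [Matrix.mul_assoc, fromBlocks_mul_fromRows, transpose_fromRows, fromCols_mul_fromRows]
  simp only [Matrix.mul_one, Matrix.mul_neg, Matrix.zero_mul, neg_zero, add_zero,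
    zero_add, transpose_one, transpose_neg, Matrix.one_mul, Matrix.neg_mul, neg_neg,
    Matrix.mul_assoc]

lemma fromRows_one_neg_transpose_mul_stateActionValue_mul (A : Matrix m m R) (B : Matrix m p R)
    (M H : Matrix m m R) (N : Matrix p p R) (K : Matrix p m R) :
    (fromRows (1 : Matrix m m R) (-K))ᵀ
        * ((fromCols A B)ᵀ * H * fromCols A B + fromBlocks M 0 0 N)
        * fromRows (1 : Matrix m m R) (-K)
      = (A - B * K)ᵀ * H * (A - B * K) + (M + Kᵀ * N * K) := by
  rw [Matrix.mul_add, Matrix.add_mul, fromRows_one_neg_transpose_mul_fromBlocks_mul,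
    ← fromCols_mul_fromRows_one_neg A B K, transpose_mul]
  simp only [Matrix.mul_assoc]

end ClosedLoop

theorem stmt11_general {n d : ℕ}
    (A : Matrix (Fin n) (Fin n) ℝ) (B : Matrix (Fin n) (Fin d) ℝ)
    (M : Matrix (Fin n) (Fin n) ℝ) (N : Matrix (Fin d) (Fin d) ℝ)
    (Hj : Matrix (Fin n) (Fin n) ℝ)
    (Kj Kj1 : Matrix (Fin d) (Fin n) ℝ)
    (hbell : Hj = (A - B * Kj)ᵀ * Hj * (A - B * Kj) + M + Kjᵀ * N * Kj)
    (Gj : Matrix (Fin n ⊕ Fin d) (Fin n ⊕ Fin d) ℝ)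
    (hGj : Gj = (Matrix.fromCols A B)ᵀ * Hj * Matrix.fromCols A B
                  + Matrix.fromBlocks M 0 0 N)
    (Ghat : Matrix (Fin n ⊕ Fin d) (Fin n ⊕ Fin d) ℝ)
    (ε : ℝ) (herr : ∀ i j, |(Gj - Ghat) i j| ≤ ε)
    (XK : Matrix (Fin d) (Fin n) ℝ → (Fin n → ℝ) →
      Matrix (Fin n ⊕ Fin d) (Fin n ⊕ Fin d) ℝ)
    (hXK : ∀ K x, XK K x =
      Matrix.fromRows 1 (-K) * Matrix.vecMulVec x x * (Matrix.fromRows 1 (-K))ᵀ)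
    (hopt : ∀ x : Fin n → ℝ, (Ghat * XK Kj1 x).trace ≤ (Ghat * XK Kj x).trace) :
    ∀ x : Fin n → ℝ,
      x ⬝ᵥ ((A - B * Kj1)ᵀ * Hj * (A - B * Kj1)) *ᵥ x
          + x ⬝ᵥ (M + Kj1ᵀ * N * Kj1) *ᵥ x
        ≤ x ⬝ᵥ Hj *ᵥ x + ε * ∑ i, ∑ j, (|XK Kj x i j| + |XK Kj1 x i j|) := by
  intro x
  have hcost : ∀ K, (Gj * XK K x).trace
      = x ⬝ᵥ ((A - B * K)ᵀ * Hj * (A - B * K)) *ᵥ x + x ⬝ᵥ (M + Kᵀ * N * K) *ᵥ x := by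
    intro K
    rw [hXK, trace_mul_conj_vecMulVec_self, hGj,
      fromRows_one_neg_transpose_mul_stateActionValue_mul, add_mulVec, dotProduct_add]
  have hvalue : (Gj * XK Kj x).trace = x ⬝ᵥ Hj *ᵥ x := by
    rw [hcost, ← dotProduct_add, ← add_mulVec, ← add_assoc, ← hbell]
  rw [← hcost, ← hvalue]
  exact trace_mul_le_of_trace_mul_le_of_abs_sub_le herr (hopt x)

/-- Approximate Lyapunov decrease for the FTL policy update in LQ control: if `Hj` is the
value matrix of policy `Kj`, `Gj` the corresponding state-action value matrix, `Ghat` an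
entrywise `ε`-accurate estimate of `Gj`, and `Kj1` satisfies
`tr(Ghat · X_{Kj1}(x)) ≤ tr(Ghat · X_{Kj}(x))` for all `x`, then for all `x`:
`xᵀ(A-B·Kj1)ᵀ Hj (A-B·Kj1) x + xᵀ(M + Kj1ᵀ N Kj1) x ≤ xᵀ Hj x + ε·𝟙ᵀ(|X_{Kj}(x)|+|X_{Kj1}(x)|)𝟙`. -/
theorem stmt11 {n d : ℕ}
    (A : Matrix (Fin n) (Fin n) ℝ) (B : Matrix (Fin n) (Fin d) ℝ)
    (M : Matrix (Fin n) (Fin n) ℝ) (N : Matrix (Fin d) (Fin d) ℝ)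
    (hM : M.IsHermitian) (hN : N.IsHermitian)
    (Hj : Matrix (Fin n) (Fin n) ℝ) (hHjsym : Hj.IsHermitian)
    (Kj Kj1 : Matrix (Fin d) (Fin n) ℝ)
    (hbell : Hj = (A - B * Kj)ᵀ * Hj * (A - B * Kj) + M + Kjᵀ * N * Kj)
    (Gj : Matrix (Fin n ⊕ Fin d) (Fin n ⊕ Fin d) ℝ)
    (hGj : Gj = (Matrix.fromCols A B)ᵀ * Hj * Matrix.fromCols A B
                  + Matrix.fromBlocks M 0 0 N)
    (Ghat : Matrix (Fin n ⊕ Fin d) (Fin n ⊕ Fin d) ℝ) (hGhat : Ghat.IsHermitian)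
    (ε : ℝ) (herr : ∀ i j, |(Gj - Ghat) i j| ≤ ε)
    (XK : Matrix (Fin d) (Fin n) ℝ → (Fin n → ℝ) →
      Matrix (Fin n ⊕ Fin d) (Fin n ⊕ Fin d) ℝ)
    (hXK : ∀ K x, XK K x =
      Matrix.fromRows 1 (-K) * Matrix.vecMulVec x x * (Matrix.fromRows 1 (-K))ᵀ)
    (hopt : ∀ x : Fin n → ℝ, (Ghat * XK Kj1 x).trace ≤ (Ghat * XK Kj x).trace) :
    ∀ x : Fin n → ℝ,
      x ⬝ᵥ ((A - B * Kj1)ᵀ * Hj * (A - B * Kj1)) *ᵥ x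
          + x ⬝ᵥ (M + Kj1ᵀ * N * Kj1) *ᵥ x
        ≤ x ⬝ᵥ Hj *ᵥ x + ε * ∑ i, ∑ j, (|XK Kj x i j| + |XK Kj1 x i j|) :=
  stmt11_general A B M N Hj Kj Kj1 hbell Gj hGj Ghat ε herr XK hXK hopt
end

section
/- Let X be a real symmetric n×n matrix, Γ a real n×n matrix, ε ≥ 0, C ≥ 0, and 0 ≤ ρ < 1, such that X ⪯ ΓᵀXΓ + ε·I in the Loewner order and ‖Γᵏ‖ ≤ √C · ρᵏ for all k ≥ 0 (spectral norm). Then X ⪯ ε·∑_{k=0}^{∞}(Γᵀ)ᵏΓᵏ, and in particular the largest eigenvalue of X satisfies λ_max(X) ≤ εC/(1 − ρ²). -/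
/-!
Conjugating `X ⪯ ΓᵀXΓ + εI` by `Γᵏ` and telescoping gives
`X ⪯ (Γᵀ)ᴺ X Γᴺ + ε ∑_{k<N} (Γᵀ)ᵏ Γᵏ`. In the `ℓ²`-operator norm, a C⋆-norm,
`‖(Γᵀ)ᵏ Γᵏ‖ = ‖Γᵏ‖² ≤ C ρ²ᵏ`, so the series converges and the remainder `(Γᵀ)ᴺ X Γᴺ` tends to `0`;
since the positive semidefinite cone is closed, the inequality passes to the limit.
Testing it on a unit eigenvector of `X` bounds every eigenvalue by `ε ‖∑ₖ (Γᵀ)ᵏ Γᵏ‖ ≤ ε C / (1 - ρ²)`.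
-/

open Matrix

open Filter Topology Finset
open scoped Matrix.Norms.L2Operator MatrixOrder ComplexOrder

section StarOrderedRing

variable {R : Type*} [Semiring R] [PartialOrder R] [StarRing R] [StarOrderedRing R]

theorem le_star_pow_mul_mul_pow_add_sum {x g e : R} (h : x ≤ star g * x * g + e) (N : ℕ) :
    x ≤ star (g ^ N) * x * g ^ N + ∑ k ∈ range N, star (g ^ k) * e * g ^ k := by
  induction N with
  | zero => simp
  | succ N ih =>
    calc x ≤ star (g ^ N) * x * g ^ N + ∑ k ∈ range N, star (g ^ k) * e * g ^ k := ih
      _ ≤ star (g ^ N) * (star g * x * g + e) * g ^ N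
            + ∑ k ∈ range N, star (g ^ k) * e * g ^ k := by
        gcongr
        exact star_left_conjugate_le_conjugate h _
      _ = _ := by
        rw [sum_range_succ, pow_succ', star_mul, mul_add, add_mul]
        simp only [mul_assoc]
        abel

end StarOrderedRing

section NormedRing

variable {R : Type*} [NormedRing R] {g : R} {c r : ℝ}

theorem sq_norm_pow_le (hg : ∀ k, ‖g ^ k‖ ≤ c * r ^ k) (k : ℕ) :
    ‖g ^ k‖ ^ 2 ≤ c ^ 2 * (r ^ 2) ^ k := by
  rw [← pow_mul, mul_comm 2, pow_mul, ← mul_pow]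
  exact pow_le_pow_left₀ (norm_nonneg _) (hg k) 2

variable [StarRing R] [CStarRing R]

theorem norm_star_mul_mul_le (a x : R) : ‖star a * x * a‖ ≤ ‖a‖ ^ 2 * ‖x‖ := by
  calc ‖star a * x * a‖ ≤ ‖star a‖ * ‖x‖ * ‖a‖ := norm_mul₃_le
    _ = ‖a‖ ^ 2 * ‖x‖ := by rw [norm_star]; ring

theorem tendsto_star_pow_mul_mul_pow (x : R) (hr0 : 0 ≤ r) (hr1 : r < 1)
    (hg : ∀ k, ‖g ^ k‖ ≤ c * r ^ k) :
    Tendsto (fun N ↦ star (g ^ N) * x * g ^ N) atTop (𝓝 0) := by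
  have hr2 : r ^ 2 < 1 := pow_lt_one₀ hr0 hr1 two_ne_zero
  refine squeeze_zero_norm (fun N ↦ (norm_star_mul_mul_le _ x).trans
    (mul_le_mul_of_nonneg_right (sq_norm_pow_le hg N) (norm_nonneg x))) ?_
  simpa using ((tendsto_pow_atTop_nhds_zero_of_lt_one (by positivity) hr2).const_mul
    (c ^ 2)).mul_const ‖x‖

theorem norm_star_pow_mul_pow_le (hg : ∀ k, ‖g ^ k‖ ≤ c * r ^ k) (k : ℕ) :
    ‖star (g ^ k) * g ^ k‖ ≤ c ^ 2 * (r ^ 2) ^ k := by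
  rw [CStarRing.norm_star_mul_self, ← sq]
  exact sq_norm_pow_le hg k

theorem hasSum_const_mul_geometric_sq (hr0 : 0 ≤ r) (hr1 : r < 1) :
    HasSum (fun k : ℕ ↦ c ^ 2 * (r ^ 2) ^ k) (c ^ 2 / (1 - r ^ 2)) :=
  (hasSum_geometric_of_lt_one (by positivity) (pow_lt_one₀ hr0 hr1 two_ne_zero)).mul_left _

theorem summable_star_pow_mul_pow [CompleteSpace R] (hr0 : 0 ≤ r) (hr1 : r < 1)
    (hg : ∀ k, ‖g ^ k‖ ≤ c * r ^ k) :
    Summable fun k ↦ star (g ^ k) * g ^ k :=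
  .of_norm_bounded (hasSum_const_mul_geometric_sq hr0 hr1).summable
    (norm_star_pow_mul_pow_le hg)

theorem norm_tsum_star_pow_mul_pow_le (hr0 : 0 ≤ r) (hr1 : r < 1)
    (hg : ∀ k, ‖g ^ k‖ ≤ c * r ^ k) :
    ‖∑' k, star (g ^ k) * g ^ k‖ ≤ c ^ 2 / (1 - r ^ 2) :=
  tsum_of_norm_bounded (hasSum_const_mul_geometric_sq hr0 hr1) (norm_star_pow_mul_pow_le hg)

theorem le_smul_tsum_star_pow_mul_pow [CompleteSpace R] [NormedAlgebra ℝ R] [PartialOrder R]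
    [StarOrderedRing R] [OrderClosedTopology R] {x : R} {ε : ℝ}
    (h : x ≤ star g * x * g + ε • 1) (hr0 : 0 ≤ r) (hr1 : r < 1)
    (hg : ∀ k, ‖g ^ k‖ ≤ c * r ^ k) :
    x ≤ ε • ∑' k, star (g ^ k) * g ^ k := by
  have hpartial (N : ℕ) :
      x ≤ star (g ^ N) * x * g ^ N + ε • ∑ k ∈ range N, star (g ^ k) * g ^ k := by
    simpa [smul_sum] using le_star_pow_mul_mul_pow_add_sum h N
  have hlim : Tendsto (fun N ↦ star (g ^ N) * x * g ^ N
      + ε • ∑ k ∈ range N, star (g ^ k) * g ^ k) atTop (𝓝 (0 + ε • ∑' k, star (g ^ k) * g ^ k)) :=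
    (tendsto_star_pow_mul_mul_pow x hr0 hr1 hg).add
      ((summable_star_pow_mul_pow hr0 hr1 hg).hasSum.tendsto_sum_nat.const_smul ε)
  rw [zero_add] at hlim
  exact ge_of_tendsto' hlim hpartial

end NormedRing

namespace Matrix

variable {n 𝕜 : Type*} [Fintype n] [RCLike 𝕜]

theorem isClosed_setOf_posSemidef : IsClosed {A : Matrix n n 𝕜 | A.PosSemidef} := by
  simp only [posSemidef_iff_dotProduct_mulVec, Set.ofPred_and, Set.ofPred_forall]
  refine (isClosed_eq continuous_id.matrix_conjTranspose continuous_id).inter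
    (isClosed_iInter fun x ↦ isClosed_le continuous_const ?_)
  fun_prop

instance instOrderClosedTopology : OrderClosedTopology (Matrix n n 𝕜) :=
  ⟨isClosed_setOf_posSemidef.preimage (continuous_snd.sub continuous_fst)⟩

theorem IsHermitian.eigenvalues_le_norm_of_le [DecidableEq n] {A B : Matrix n n 𝕜}
    (hA : A.IsHermitian) (hAB : A ≤ B) (i : n) : hA.eigenvalues i ≤ ‖B‖ := by
  set v := hA.eigenvectorBasis i
  have hv : ‖v‖ = 1 := hA.eigenvectorBasis.orthonormal.1 i
  have hquad : RCLike.re (star ⇑v ⬝ᵥ (A *ᵥ ⇑v)) ≤ RCLike.re (star ⇑v ⬝ᵥ (B *ᵥ ⇑v)) := by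
    have := (le_iff.mp hAB).re_dotProduct_nonneg v
    simpa [sub_mulVec, dotProduct_sub] using this
  calc hA.eigenvalues i = RCLike.re (star ⇑v ⬝ᵥ (A *ᵥ ⇑v)) := hA.eigenvalues_eq i
    _ ≤ RCLike.re (star ⇑v ⬝ᵥ (B *ᵥ ⇑v)) := hquad
    _ ≤ ‖star ⇑v ⬝ᵥ (B *ᵥ ⇑v)‖ := RCLike.re_le_norm _
    _ = ‖inner 𝕜 v ((EuclideanSpace.equiv n 𝕜).symm (B *ᵥ ⇑v))‖ := by
      rw [EuclideanSpace.inner_eq_star_dotProduct, dotProduct_comm]; rfl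
    _ ≤ ‖v‖ * (‖B‖ * ‖v‖) := (norm_inner_le_norm _ _).trans
      (mul_le_mul_of_nonneg_left (l2_opNorm_mulVec B v) (norm_nonneg _))
    _ = ‖B‖ := by rw [hv, one_mul, mul_one]

end Matrix

/-- If `X` is symmetric with `X ⪯ ΓᵀXΓ + ε•I` and `‖Γᵏ‖ ≤ √C·ρᵏ` for all `k` with
`0 ≤ ρ < 1`, then `X ⪯ ε·∑_{k=0}^∞ (Γᵀ)ᵏΓᵏ` and `λ_max(X) ≤ εC/(1-ρ²)`. -/
theorem stmt13 {n : ℕ} (X Γ : Matrix (Fin n) (Fin n) ℝ) (hX : X.IsHermitian)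
    (ε C ρ : ℝ) (hε : 0 ≤ ε) (hC : 0 ≤ C) (hρ0 : 0 ≤ ρ) (hρ1 : ρ < 1)
    (hle : (Γᵀ * X * Γ + ε • (1 : Matrix (Fin n) (Fin n) ℝ) - X).PosSemidef)
    (hΓ : ∀ k : ℕ, specNorm (Γ ^ k) ≤ Real.sqrt C * ρ ^ k) :
    Summable (fun k : ℕ => (Γᵀ) ^ k * Γ ^ k) ∧
    (ε • (∑' k : ℕ, (Γᵀ) ^ k * Γ ^ k) - X).PosSemidef ∧
    (⨆ i, hX.eigenvalues i) ≤ ε * C / (1 - ρ ^ 2) := by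
  -- Over `ℝ`, `star` is the transpose and `specNorm` is by definition the `ℓ²`-operator norm.
  have hstar : star Γ = Γᵀ := by rw [star_eq_conjTranspose, conjTranspose_eq_transpose_of_trivial]
  simp_rw [← hstar, ← star_pow] at hle ⊢
  have hXS : X ≤ ε • ∑' k, star (Γ ^ k) * Γ ^ k := le_smul_tsum_star_pow_mul_pow hle hρ0 hρ1 hΓ
  refine ⟨summable_star_pow_mul_pow hρ0 hρ1 hΓ, hXS, Real.iSup_le (fun i ↦ ?_)
    (div_nonneg (mul_nonneg hε hC) (sub_nonneg.mpr (pow_le_one₀ hρ0 hρ1.le)))⟩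
  calc hX.eigenvalues i ≤ ‖ε • ∑' k, star (Γ ^ k) * Γ ^ k‖ := hX.eigenvalues_le_norm_of_le hXS i
    _ = ε * ‖∑' k, star (Γ ^ k) * Γ ^ k‖ := by rw [norm_smul, Real.norm_of_nonneg hε]
    _ ≤ ε * (√C ^ 2 / (1 - ρ ^ 2)) := by gcongr; exact norm_tsum_star_pow_mul_pow_le hρ0 hρ1 hΓ
    _ = ε * C / (1 - ρ ^ 2) := by rw [Real.sq_sqrt hC, mul_div_assoc]
end

section
/- Let A be a real n×n matrix, B a real n×d matrix, M, N real symmetric matrices of sizes n×n and d×d, K_t, K ∈ ℝ^{d×n}, and let H_t, H, Σ, W be real n×n matrices satisfying: H_t = (A − BK_t)ᵀ H_t (A − BK_t) + M + K_tᵀ N K_t; H = (A − BK)ᵀ H (A − BK) + M + Kᵀ N K; and Σ = (A − BK) Σ (A − BK)ᵀ + W. Then tr(H_t W) − tr(H W) = tr(Σ·(H_t − (A − BK)ᵀ H_t (A − BK) − M − Kᵀ N K)). -/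
open Matrix

/-- Performance-difference identity in LQ control: with `Ht, H` the value matrices of
policies `Kt, K` and `Σ` the steady-state covariance of policy `K`,
`tr(Ht·W) - tr(H·W) = tr(Σ·(Ht - (A-BK)ᵀHt(A-BK) - M - KᵀNK))`. -/
theorem stmt16 {n d : ℕ}
    (A : Matrix (Fin n) (Fin n) ℝ) (B : Matrix (Fin n) (Fin d) ℝ)
    (M : Matrix (Fin n) (Fin n) ℝ) (N : Matrix (Fin d) (Fin d) ℝ)
    (hM : M.IsHermitian) (hN : N.IsHermitian)
    (Kt K : Matrix (Fin d) (Fin n) ℝ)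
    (Ht Hm S W : Matrix (Fin n) (Fin n) ℝ)
    (hHt : Ht = (A - B * Kt)ᵀ * Ht * (A - B * Kt) + M + Ktᵀ * N * Kt)
    (hHm : Hm = (A - B * K)ᵀ * Hm * (A - B * K) + M + Kᵀ * N * K)
    (hS : S = (A - B * K) * S * (A - B * K)ᵀ + W) :
    (Ht * W).trace - (Hm * W).trace =
      (S * (Ht - (A - B * K)ᵀ * Ht * (A - B * K) - M - Kᵀ * N * K)).trace := by
  set L := A - B * K with hL
  have hW : W = S - L * S * Lᵀ := by nth_rewrite 1 [hS]; abel
  have hD : Ht - Lᵀ * Ht * L - M - Kᵀ * N * K = (Ht - Hm) - Lᵀ * (Ht - Hm) * L := by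
    nth_rewrite 1 [hHm]
    noncomm_ring
  rw [hD, hW]
  rw [Matrix.mul_sub, Matrix.mul_sub, Matrix.mul_sub, trace_sub, trace_sub, trace_sub]
  have h1 : (Ht * (L * S * Lᵀ)).trace = (S * (Lᵀ * Ht * L)).trace := by
    rw [show Ht * (L * S * Lᵀ) = (Ht * L * S) * Lᵀ by noncomm_ring,
        trace_mul_comm, show Lᵀ * (Ht * L * S) = (Lᵀ * (Ht * L)) * S by noncomm_ring,
        trace_mul_comm, Matrix.mul_assoc]
  have h2 : (Hm * (L * S * Lᵀ)).trace = (S * (Lᵀ * Hm * L)).trace := by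
    rw [show Hm * (L * S * Lᵀ) = (Hm * L * S) * Lᵀ by noncomm_ring,
        trace_mul_comm, show Lᵀ * (Hm * L * S) = (Lᵀ * (Hm * L)) * S by noncomm_ring,
        trace_mul_comm, Matrix.mul_assoc]
  rw [trace_mul_comm Ht S, trace_mul_comm Hm S, h1, h2]
  simp only [Matrix.mul_sub, Matrix.sub_mul, trace_sub]
  ring
end

section
/- Let Σ be a real symmetric n×n matrix with Σ ⪰ σ·I for some σ > 0, let G₂₂ be a real symmetric d×d matrix with G₂₂ ⪰ μ·I for some μ > 0, and let G₁₁ ∈ ℝ^{n×n}, G₁₂ ∈ ℝ^{n×d}, G₂₁ = G₁₂ᵀ. Define f : ℝ^{d×n} → ℝ by f(K) = tr(Σ(G₁₁ − KᵀG₂₁ − G₁₂K + KᵀG₂₂K)). Then f is strongly convex with parameter 2σμ with respect to the Frobenius norm; equivalently, the function K ↦ f(K) − σμ‖K‖_F² is convex on ℝ^{d×n}. -/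
/-!
Split `Σ = (Σ - σ•1) + σ•1` and `G₂₂ = (G₂₂ - μ•1) + μ•1`. Since `‖K‖_F² = tr (Kᵀ K)`, the
quadratic part of `f K - σμ‖K‖_F²` becomes `tr (Σ Kᵀ (G₂₂ - μ•1) K) + μ tr ((Σ - σ•1) Kᵀ K)`,
a sum of forms `K ↦ tr (A Kᵀ B K)` with `A, B ⪰ 0`. Each is nonnegative, because the trace of
a product of two positive semidefinite matrices is nonnegative, and a nonnegative quadratic
form is convex. What remains of `f` is affine.
-/

open Matrix

theorem QuadraticMap.convexOn_of_nonneg {E : Type*} [AddCommGroup E] [Module ℝ E]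
    (Q : QuadraticMap ℝ E ℝ) (hQ : ∀ x, 0 ≤ Q x) : ConvexOn ℝ Set.univ Q := by
  refine ⟨convex_univ, fun x _ y _ a b ha hb hab => ?_⟩
  have hadd (u v : E) : Q (u + v) = Q u + Q v + polar Q u v := by
    rw [polar]; ring
  have hcomb : Q (a • x + b • y) = a ^ 2 * Q x + b ^ 2 * Q y + a * b * polar Q x y := by
    rw [hadd, Q.map_smul, Q.map_smul, polar_smul_left, polar_smul_right]
    simp only [smul_eq_mul]; ring
  have hdiff : Q (x - y) = Q x + Q y - polar Q x y := by
    rw [sub_eq_add_neg, hadd, Q.map_neg, polar_neg_right]; ring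
  have hgap := mul_nonneg (mul_nonneg ha hb) (hQ (x - y))
  rw [hdiff] at hgap
  obtain rfl : b = 1 - a := by linarith
  simp only [smul_eq_mul, hcomb]
  linear_combination hgap

open scoped ComplexOrder MatrixOrder in
theorem Matrix.PosSemidef.trace_mul_nonneg {𝕜 n : Type*} [RCLike 𝕜] [Fintype n] [DecidableEq n]
    {A B : Matrix n n 𝕜} (hA : A.PosSemidef) (hB : B.PosSemidef) : 0 ≤ (A * B).trace := by
  obtain ⟨C, rfl⟩ := CStarAlgebra.nonneg_iff_eq_star_mul_self.mp hA.nonneg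
  -- `tr (Cᴴ C B) = tr (C B Cᴴ)`
  rw [Matrix.mul_assoc, Matrix.trace_mul_comm, Matrix.mul_assoc, ← Matrix.mul_assoc]
  exact (hB.mul_mul_conjTranspose_same C).trace_nonneg

namespace Matrix

variable {m n : Type*} [Fintype m] [Fintype n]

noncomputable def traceQuadForm (A : Matrix n n ℝ) (B : Matrix m m ℝ) :
    QuadraticMap ℝ (Matrix m n ℝ) ℝ :=
  LinearMap.BilinMap.toQuadraticMap <|
    LinearMap.mk₂ ℝ (fun K L : Matrix m n ℝ => (A * (Kᵀ * B * L)).trace)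
    (fun _ _ _ => by simp only [transpose_add, Matrix.add_mul, Matrix.mul_add, trace_add])
    (fun _ _ _ => by simp only [transpose_smul, Matrix.smul_mul, Matrix.mul_smul, trace_smul])
    (fun _ _ _ => by simp only [Matrix.mul_add, trace_add])
    (fun _ _ _ => by simp only [Matrix.mul_smul, trace_smul])

theorem traceQuadForm_apply (A : Matrix n n ℝ) (B : Matrix m m ℝ) (K : Matrix m n ℝ) :
    traceQuadForm A B K = (A * (Kᵀ * B * K)).trace :=
  rfl

theorem traceQuadForm_nonneg [DecidableEq n] {A : Matrix n n ℝ} {B : Matrix m m ℝ}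
    (hA : A.PosSemidef) (hB : B.PosSemidef) (K : Matrix m n ℝ) : 0 ≤ traceQuadForm A B K := by
  rw [traceQuadForm_apply, ← conjTranspose_eq_transpose_of_trivial]
  exact hA.trace_mul_nonneg (hB.conjTranspose_mul_mul_same K)

end Matrix

/-- Strong convexity (with parameter `2σμ` w.r.t. the Frobenius norm) of
`f(K) = tr(Σ(G₁₁ - KᵀG₂₁ - G₁₂K + KᵀG₂₂K))` when `Σ ⪰ σ•I` and `G₂₂ ⪰ μ•I`:
equivalently, `K ↦ f(K) - σμ‖K‖_F²` is convex. -/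
theorem stmt17 {n d : ℕ}
    (S : Matrix (Fin n) (Fin n) ℝ) (σ : ℝ) (hσ : 0 < σ)
    (hS : (S - σ • (1 : Matrix (Fin n) (Fin n) ℝ)).PosSemidef)
    (G₂₂ : Matrix (Fin d) (Fin d) ℝ) (μ : ℝ) (hμ : 0 < μ)
    (hG22 : (G₂₂ - μ • (1 : Matrix (Fin d) (Fin d) ℝ)).PosSemidef)
    (G₁₁ : Matrix (Fin n) (Fin n) ℝ) (G₁₂ : Matrix (Fin n) (Fin d) ℝ) :
    ConvexOn ℝ Set.univ (fun K : Matrix (Fin d) (Fin n) ℝ =>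
      (S * (G₁₁ - Kᵀ * G₁₂ᵀ - G₁₂ * K + Kᵀ * G₂₂ * K)).trace
        - σ * μ * ∑ i, ∑ j, K i j ^ 2) := by
  have hS' : S.PosSemidef := by simpa using hS.add (PosSemidef.one.smul hσ.le)
  let ℓ : Matrix (Fin d) (Fin n) ℝ →ₗ[ℝ] ℝ :=
    { toFun := fun K => (S * (Kᵀ * G₁₂ᵀ + G₁₂ * K)).trace
      map_add' := fun K L => by
        simp only [transpose_add, Matrix.add_mul, Matrix.mul_add, trace_add]; ring
      map_smul' := fun c K => by
        simp only [transpose_smul, Matrix.smul_mul, Matrix.mul_smul, ← smul_add, trace_smul,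
          RingHom.id_apply] }
  let Q := traceQuadForm S (G₂₂ - μ • 1) + μ • traceQuadForm (S - σ • 1) 1
  have hQ (K : Matrix (Fin d) (Fin n) ℝ) : 0 ≤ Q K :=
    add_nonneg (traceQuadForm_nonneg hS' hG22 K)
      (mul_nonneg hμ.le (traceQuadForm_nonneg hS PosSemidef.one K))
  have hsq (K : Matrix (Fin d) (Fin n) ℝ) : ∑ i, ∑ j, K i j ^ 2 = (Kᵀ * K).trace := by
    simp only [trace, diag, mul_apply, transpose_apply, sq]
    exact Finset.sum_comm
  have hdecomp : (fun K : Matrix (Fin d) (Fin n) ℝ =>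
      (S * (G₁₁ - Kᵀ * G₁₂ᵀ - G₁₂ * K + Kᵀ * G₂₂ * K)).trace - σ * μ * ∑ i, ∑ j, K i j ^ 2)
        = fun K => (S * G₁₁).trace + (-ℓ) K + Q K := by
    funext K
    simp only [Q, ℓ, hsq, _root_.add_apply, _root_.smul_apply, traceQuadForm_apply,
      LinearMap.neg_apply, LinearMap.coe_mk, AddHom.coe_mk, Matrix.mul_sub, Matrix.sub_mul,
      Matrix.mul_add, Matrix.smul_mul, Matrix.mul_smul, Matrix.mul_one, Matrix.one_mul,
      trace_add, trace_sub, trace_smul, smul_eq_mul]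
    ring
  rw [hdecomp]
  exact ((convexOn_const _ convex_univ).add ((-ℓ).convexOn convex_univ)).add
    (Q.convexOn_of_nonneg hQ)
end
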